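/- arXiv:1505.04824 — 2 statements merged into one kernel-verified Lean document; each statement's English description precedes it below -/
import Mathlib

section
/- Consider the iterates of Algorithm 1 under Assumptions (A1)–(A4). Then for every k ∈ ℕ₀, every optimizer x* ∈ X*, and every strictly positive sequence {η(k)}: φ(x(k+1)) − φ* + (1/γ(k)) D_ω(x(k+1), x*) ≤ (1/(2η(k)))‖e(d(k))‖_*² + ⟨e(d(k)), x(k) − x*⟩ + (1/γ(k)) D_ω(x(k), x*) + (L(τ_max+1)/2) Σ_{j=0}^{τ_max} ‖x(k−j) − x(k−j+1)‖² − (1/2)(1/γ(k) − η(k))‖x(k+1) − x(k)‖² − (μ_Ψ/2)‖x(k+1) − x*‖², where e(k) := ∇f(x(k)) − g_ave(k) and μ_Ψ ≥ 0 is the strong convexity modulus of Ψ (μ_Ψ = 0 if Ψ is merely convex). -/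
open scoped RealInnerProductSpace Classical
open MeasureTheory

/-- `N` is a norm on `ℝⁿ`. -/
def IsNorm {n : ℕ} (N : EuclideanSpace ℝ (Fin n) → ℝ) : Prop :=
  (∀ x, 0 ≤ N x) ∧ (∀ x, N x = 0 ↔ x = 0) ∧
  (∀ (c : ℝ) (x : EuclideanSpace ℝ (Fin n)), N (c • x) = |c| * N x) ∧
  (∀ x y, N (x + y) ≤ N x + N y)

/-- The dual norm of `N`: `‖y‖_* = sup_{N(x) ≤ 1} ⟨x, y⟩`. -/
noncomputable def dualNorm {n : ℕ} (N : EuclideanSpace ℝ (Fin n) → ℝ)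
    (y : EuclideanSpace ℝ (Fin n)) : ℝ :=
  sSup {r : ℝ | ∃ x : EuclideanSpace ℝ (Fin n), N x ≤ 1 ∧ r = ⟪x, y⟫}

set_option maxHeartbeats 1000000

section helpers
variable {n : ℕ} {N : EuclideanSpace ℝ (Fin n) → ℝ}

lemma SG_neg (hN : IsNorm N) (x : EuclideanSpace ℝ (Fin n)) : N (-x) = N x := by
  have := hN.2.2.1 (-1) x
  simpa using this

lemma SG_sub_comm (hN : IsNorm N) (x y : EuclideanSpace ℝ (Fin n)) : N (x - y) = N (y - x) := by
  rw [← SG_neg hN (x - y)]; congr 1; abel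

lemma SG_sum_le (hN : IsNorm N) (m : ℕ) (a : ℕ → EuclideanSpace ℝ (Fin n)) :
    N (∑ j ∈ Finset.range m, a j) ≤ ∑ j ∈ Finset.range m, N (a j) := by
  induction m with
  | zero => simp [(hN.2.1 0).2 rfl]
  | succ m ih =>
      rw [Finset.sum_range_succ, Finset.sum_range_succ]
      exact le_trans (hN.2.2.2 _ _) (by linarith)

lemma SG_upper (hN : IsNorm N) : ∃ C : ℝ, 0 ≤ C ∧ ∀ x, N x ≤ C * ‖x‖ := by
  refine ⟨∑ i : Fin n, N (EuclideanSpace.single i 1), Finset.sum_nonneg fun i _ => hN.1 _, ?_⟩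
  intro x
  have hx : x = ∑ i : Fin n, x i • EuclideanSpace.single i 1 := by
    ext j
    rw [WithLp.ofLp_sum, Finset.sum_apply]
    simp [EuclideanSpace.single_apply]
  have h1 : N x ≤ ∑ i : Fin n, N (x i • EuclideanSpace.single i 1) := by
    conv_lhs => rw [hx]
    classical
    induction (Finset.univ : Finset (Fin n)) using Finset.induction with
    | empty => simp [(hN.2.1 0).2 rfl]
    | insert _ _ hnot ih =>
        rw [Finset.sum_insert hnot, Finset.sum_insert hnot]
        exact le_trans (hN.2.2.2 _ _) (by linarith)
  refine h1.trans ?_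
  rw [Finset.sum_mul]
  apply Finset.sum_le_sum
  intro i _
  rw [hN.2.2.1]
  have : |x i| ≤ ‖x‖ := by
    have := EuclideanSpace.norm_eq x
    rw [this]
    have h2 : |x i| = Real.sqrt ((x i)^2) := by
      rw [Real.sqrt_sq_eq_abs]
    rw [h2]
    apply Real.sqrt_le_sqrt
    have : (x i)^2 ≤ ∑ j : Fin n, (x j)^2 := by
      apply Finset.single_le_sum (f := fun j => (x j)^2) (fun j _ => sq_nonneg _) (Finset.mem_univ i)
    simpa [sq] using this
  calc |x i| * N (EuclideanSpace.single i 1) ≤ ‖x‖ * N (EuclideanSpace.single i 1) :=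
        mul_le_mul_of_nonneg_right this (hN.1 _)
    _ = N (EuclideanSpace.single i 1) * ‖x‖ := mul_comm _ _

lemma SG_lower (hN : IsNorm N) : ∃ m : ℝ, 0 < m ∧ ∀ x, m * ‖x‖ ≤ N x := by
  rcases Nat.eq_zero_or_pos n with hn | hn
  · refine ⟨1, one_pos, fun x => ?_⟩
    subst hn
    have : x = 0 := by ext i; exact absurd i.2 (by omega)
    simp [this, (hN.2.1 0).2 rfl]
  · obtain ⟨C, hC0, hC⟩ := SG_upper hN
    have hcont : Continuous N := by
      have hlip : LipschitzWith (Real.toNNReal C) N := by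
        apply LipschitzWith.of_dist_le_mul
        intro a b
        have h1 : N a ≤ N (a - b) + N b := by
          have := hN.2.2.2 (a - b) b; simpa using this
        have h2 : N b ≤ N (b - a) + N a := by
          have := hN.2.2.2 (b - a) a; simpa using this
        rw [SG_sub_comm hN b a] at h2
        have h3 : |N a - N b| ≤ N (a - b) := abs_sub_le_iff.2 ⟨by linarith, by linarith⟩
        have h4 : N (a - b) ≤ C * ‖a - b‖ := hC _
        rw [Real.dist_eq, dist_eq_norm]
        refine h3.trans (h4.trans ?_)
        rw [Real.coe_toNNReal C hC0]
      exact hlip.continuous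
    have hnontriv : Nontrivial (EuclideanSpace ℝ (Fin n)) := by
      refine ⟨EuclideanSpace.single ⟨0, hn⟩ 1, 0, ?_⟩
      intro h
      have := congrArg (fun v : EuclideanSpace ℝ (Fin n) => v ⟨0, hn⟩) h
      simp [EuclideanSpace.single_apply] at this
    have hsne : (Metric.sphere (0 : EuclideanSpace ℝ (Fin n)) 1).Nonempty :=
      NormedSpace.sphere_nonempty.2 zero_le_one
    obtain ⟨x₀, hx₀mem, hx₀⟩ :=
      (isCompact_sphere (0 : EuclideanSpace ℝ (Fin n)) 1).exists_isMinOn hsne hcont.continuousOn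
    have hx₀norm : ‖x₀‖ = 1 := by simpa using hx₀mem
    have hx₀ne : x₀ ≠ 0 := by
      intro h; rw [h] at hx₀norm; simp at hx₀norm
    have hm : 0 < N x₀ := by
      rcases lt_or_eq_of_le (hN.1 x₀) with h | h
      · exact h
      · exact absurd ((hN.2.1 x₀).1 h.symm) hx₀ne
    refine ⟨N x₀, hm, fun x => ?_⟩
    rcases eq_or_ne x 0 with rfl | hx
    · simp [(hN.2.1 0).2 rfl]
    · have hxn : 0 < ‖x‖ := norm_pos_iff.2 hx
      have hmem : (‖x‖⁻¹ • x) ∈ Metric.sphere (0 : EuclideanSpace ℝ (Fin n)) 1 := by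
        simp [norm_smul, abs_of_pos (inv_pos.2 hxn), inv_mul_cancel₀ (ne_of_gt hxn)]
      have := hx₀ hmem
      have h2 : N x₀ ≤ N (‖x‖⁻¹ • x) := this
      rw [hN.2.2.1, abs_of_pos (inv_pos.2 hxn)] at h2
      have := mul_le_mul_of_nonneg_right h2 (le_of_lt hxn)
      calc N x₀ * ‖x‖ ≤ ‖x‖⁻¹ * N x * ‖x‖ := this
        _ = N x := by field_simp
end helpers

section dual
variable {n : ℕ} {N : EuclideanSpace ℝ (Fin n) → ℝ}

lemma SG_dual_mem (y : EuclideanSpace ℝ (Fin n)) (hN : IsNorm N) :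
    (0:ℝ) ∈ {r : ℝ | ∃ x : EuclideanSpace ℝ (Fin n), N x ≤ 1 ∧ r = ⟪x, y⟫} := by
  refine ⟨0, by simp [(hN.2.1 0).2 rfl], by simp⟩

lemma SG_dual_bdd (hN : IsNorm N) (y : EuclideanSpace ℝ (Fin n)) :
    BddAbove {r : ℝ | ∃ x : EuclideanSpace ℝ (Fin n), N x ≤ 1 ∧ r = ⟪x, y⟫} := by
  obtain ⟨m, hm, hml⟩ := SG_lower hN
  refine ⟨m⁻¹ * ‖y‖, ?_⟩
  rintro r ⟨x, hx, rfl⟩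
  have h1 : ⟪x, y⟫ ≤ ‖x‖ * ‖y‖ := real_inner_le_norm x y
  have h2 : ‖x‖ ≤ m⁻¹ := by
    have := hml x
    rw [← le_div_iff₀' hm] at this
    calc ‖x‖ ≤ N x / m := this
      _ ≤ 1 / m := by gcongr
      _ = m⁻¹ := one_div m
  calc ⟪x, y⟫ ≤ ‖x‖ * ‖y‖ := h1
    _ ≤ m⁻¹ * ‖y‖ := mul_le_mul_of_nonneg_right h2 (norm_nonneg y)

lemma SG_dual_nonneg (hN : IsNorm N) (y : EuclideanSpace ℝ (Fin n)) : 0 ≤ dualNorm N y :=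
  le_csSup (SG_dual_bdd hN y) (SG_dual_mem y hN)

lemma SG_le_dual (hN : IsNorm N) {x y : EuclideanSpace ℝ (Fin n)} (h : N x ≤ 1) :
    ⟪x, y⟫ ≤ dualNorm N y :=
  le_csSup (SG_dual_bdd hN y) ⟨x, h, rfl⟩

lemma SG_inner_le_dual (hN : IsNorm N) (x y : EuclideanSpace ℝ (Fin n)) :
    ⟪x, y⟫ ≤ N x * dualNorm N y := by
  rcases eq_or_lt_of_le (hN.1 x) with h | h
  · have hx0 : x = 0 := (hN.2.1 x).1 h.symm
    rw [hx0]
    simp only [inner_zero_left]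
    have := SG_dual_nonneg hN y
    nlinarith [hN.1 (0 : EuclideanSpace ℝ (Fin n))]
  · have h1 : N ((N x)⁻¹ • x) ≤ 1 := by
      rw [hN.2.2.1, abs_of_pos (inv_pos.2 h), inv_mul_cancel₀ (ne_of_gt h)]
    have h2 := SG_le_dual hN (y := y) h1
    rw [real_inner_smul_left] at h2
    have := mul_le_mul_of_nonneg_left h2 (le_of_lt h)
    rw [← mul_assoc, mul_inv_cancel₀ (ne_of_gt h), one_mul] at this
    exact this

lemma SG_dual_le (hN : IsNorm N) {y : EuclideanSpace ℝ (Fin n)} {c : ℝ}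
    (h : ∀ x, N x ≤ 1 → ⟪x, y⟫ ≤ c) : dualNorm N y ≤ c := by
  apply csSup_le ⟨0, SG_dual_mem y hN⟩
  rintro r ⟨x, hx, rfl⟩
  exact h x hx

lemma SG_dual_integral_le {Ξ : Type} [MeasurableSpace Ξ] {ν : MeasureTheory.Measure Ξ}
    [MeasureTheory.IsProbabilityMeasure ν] (hN : IsNorm N)
    {g : Ξ → EuclideanSpace ℝ (Fin n)} (hg : MeasureTheory.Integrable g ν) {c : ℝ}
    (hb : ∀ ξ, dualNorm N (g ξ) ≤ c) :
    dualNorm N (∫ ξ, g ξ ∂ν) ≤ c := by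
  apply SG_dual_le hN
  intro x hx
  rw [← integral_inner hg x]
  have hint : MeasureTheory.Integrable (fun ξ => ⟪x, g ξ⟫) ν := hg.const_inner x
  calc ∫ ξ, ⟪x, g ξ⟫ ∂ν ≤ ∫ _ξ, c ∂ν := by
        apply MeasureTheory.integral_mono hint (MeasureTheory.integrable_const c)
        intro ξ
        calc ⟪x, g ξ⟫ ≤ N x * dualNorm N (g ξ) := SG_inner_le_dual hN x (g ξ)
          _ ≤ 1 * dualNorm N (g ξ) :=
              mul_le_mul_of_nonneg_right hx (SG_dual_nonneg hN _)
          _ = dualNorm N (g ξ) := one_mul _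
          _ ≤ c := hb ξ
    _ = c := by simp
end dual

section deriv
open Filter Set
open scoped Topology
variable {n : ℕ}

lemma SG_line_deriv {φ : EuclideanSpace ℝ (Fin n) → ℝ} {g : EuclideanSpace ℝ (Fin n)}
    {a v : EuclideanSpace ℝ (Fin n)} {t : ℝ}
    (h : HasGradientAt φ g (a + t • v)) :
    HasDerivAt (fun s : ℝ => φ (a + s • v)) ⟪g, v⟫ t := by
  have hc : HasDerivAt (fun s : ℝ => a + s • v) v t := by
    simpa using ((hasDerivAt_id t).smul_const v).const_add a
  have := h.hasFDerivAt.comp_hasDerivAt t hc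
  simp [InnerProductSpace.toDual_apply_apply] at this
  exact this

lemma SG_subgrad {φ : EuclideanSpace ℝ (Fin n) → ℝ} {g : EuclideanSpace ℝ (Fin n) → EuclideanSpace ℝ (Fin n)}
    (hconv : ConvexOn ℝ Set.univ φ) (hg : ∀ x, HasGradientAt φ (g x) x)
    (z y : EuclideanSpace ℝ (Fin n)) : φ z + ⟪g z, y - z⟫ ≤ φ y := by
  set v := y - z with hv
  have h0 : z + (0:ℝ) • v = z := by simp
  have hD : HasDerivAt (fun s : ℝ => φ (z + s • v)) ⟪g (z + (0:ℝ) • v), v⟫ 0 :=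
    SG_line_deriv (hg _)
  rw [h0] at hD
  have hslope : Tendsto (slope (fun s : ℝ => φ (z + s • v)) 0) (𝓝[>] 0) (𝓝 ⟪g z, v⟫) :=
    (hasDerivAt_iff_tendsto_slope.1 hD).mono_left
      (nhdsWithin_mono 0 (fun u hu => ne_of_gt hu))
  have hbound : ∀ᶠ t in 𝓝[>] (0:ℝ), slope (fun s : ℝ => φ (z + s • v)) 0 t ≤ φ y - φ z := by
    filter_upwards [Ioc_mem_nhdsGT zero_lt_one]
    intro t ht
    have key : φ (z + t • v) ≤ (1 - t) * φ z + t * φ y := by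
      have hz : z + t • v = (1 - t) • z + t • y := by rw [hv]; module
      rw [hz]
      exact hconv.2 (Set.mem_univ z) (Set.mem_univ y) (by linarith [ht.2]) (le_of_lt ht.1)
        (by ring)
    have hsl : slope (fun s : ℝ => φ (z + s • v)) 0 t = (φ (z + t • v) - φ z) / t := by
      rw [slope_def_field]
      simp [h0]
    rw [hsl, div_le_iff₀ ht.1]
    nlinarith [ht.1.le]
  have := le_of_tendsto hslope hbound
  linarith

lemma SG_monoGrad {φ : EuclideanSpace ℝ (Fin n) → ℝ} {g : EuclideanSpace ℝ (Fin n) → EuclideanSpace ℝ (Fin n)}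
    (hconv : ConvexOn ℝ Set.univ φ) (hg : ∀ x, HasGradientAt φ (g x) x)
    (z y : EuclideanSpace ℝ (Fin n)) : 0 ≤ ⟪g y - g z, y - z⟫ := by
  have h1 := SG_subgrad hconv hg z y
  have h2 := SG_subgrad hconv hg y z
  have e1 : ⟪g y - g z, y - z⟫ = ⟪g y, y - z⟫ - ⟪g z, y - z⟫ := inner_sub_left _ _ _
  have e2 : ⟪g y, z - y⟫ = -⟪g y, y - z⟫ := by
    rw [show z - y = -(y - z) by abel, inner_neg_right]
  rw [e2] at h2
  linarith

lemma SG_darboux_mono {g g' : ℝ → ℝ} (hd : ∀ t, HasDerivAt g (g' t) t)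
    (E : Set ℝ) (hE : ∀ s ∈ E, ∀ t ∈ E, s ≤ t → g' s ≤ g' t)
    (h0 : ∀ t, t ∉ E → g' t = 0) : Monotone g' := by
  intro s t hst
  rcases eq_or_lt_of_le hst with rfl | hlt
  · exact le_refl _
  by_cases hs : s ∈ E <;> by_cases ht : t ∈ E
  · exact hE s hs t ht hst
  · rw [h0 t ht]
    by_contra hpos
    push_neg at hpos
    obtain ⟨u, hu, hgu⟩ := exists_hasDerivWithinAt_eq_of_lt_of_gt (le_of_lt hlt)
      (fun x _ => (hd x).hasDerivWithinAt) (m := g' s / 2) (by linarith)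
      (by rw [h0 t ht]; linarith)
    have huE : u ∈ E := by
      by_contra h'
      rw [h0 u h'] at hgu; linarith
    have := hE s hs u huE (le_of_lt hu.1)
    rw [hgu] at this; linarith
  · rw [h0 s hs]
    by_contra hneg
    push_neg at hneg
    obtain ⟨u, hu, hgu⟩ := exists_hasDerivWithinAt_eq_of_lt_of_gt (le_of_lt hlt)
      (fun x _ => (hd x).hasDerivWithinAt) (m := g' t / 2)
      (by rw [h0 s hs]; linarith) (by linarith)
    have huE : u ∈ E := by
      by_contra h'
      rw [h0 u h'] at hgu; linarith
    have := hE u huE t ht (le_of_lt hu.2)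
    rw [hgu] at this; linarith
  · rw [h0 s hs, h0 t ht]

lemma SG_darboux_lip {g g' : ℝ → ℝ} {K : ℝ} (hK : 0 ≤ K) (hd : ∀ t, HasDerivAt g (g' t) t)
    (E : Set ℝ) (hE : ∀ s ∈ E, ∀ t ∈ E, s ≤ t → g' t - g' s ≤ K * (t - s))
    (h0 : ∀ t, t ∉ E → g' t = 0) : ∀ s t, s ≤ t → g' t - g' s ≤ K * (t - s) := by
  intro s t hst
  rcases eq_or_lt_of_le hst with rfl | hlt
  · simp
  have hKts : 0 ≤ K * (t - s) := mul_nonneg hK (by linarith)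
  by_cases hs : s ∈ E <;> by_cases ht : t ∈ E
  · exact hE s hs t ht hst
  · rw [h0 t ht]
    rcases le_or_gt 0 (g' s) with h | h
    · linarith
    · by_contra hcon
      push_neg at hcon
      have hB : g' s + K * (t - s) < 0 := by linarith
      have hm1 : g' s < (g' s + K * (t - s)) / 2 := by linarith
      have hm2 : (g' s + K * (t - s)) / 2 < 0 := by linarith
      obtain ⟨u, hu, hgu⟩ := exists_hasDerivWithinAt_eq_of_gt_of_lt (le_of_lt hlt)
        (fun x _ => (hd x).hasDerivWithinAt) hm1 (by rw [h0 t ht]; exact hm2)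
      have huE : u ∈ E := by
        by_contra h'
        rw [h0 u h'] at hgu; linarith
      have h3 := hE s hs u huE (le_of_lt hu.1)
      rw [hgu] at h3
      have hKu : K * (u - s) ≤ K * (t - s) :=
        mul_le_mul_of_nonneg_left (by linarith [hu.2]) hK
      linarith
  · rw [h0 s hs]
    rcases le_or_gt (g' t) 0 with h | h
    · linarith
    · by_contra hcon
      push_neg at hcon
      have hgt : 0 < g' t - K * (t - s) := by linarith
      obtain ⟨u, hu, hgu⟩ := exists_hasDerivWithinAt_eq_of_gt_of_lt (le_of_lt hlt)
        (fun x _ => (hd x).hasDerivWithinAt) (m := (g' t - K * (t - s)) / 2)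
        (by rw [h0 s hs]; linarith) (by linarith)
      have huE : u ∈ E := by
        by_contra h'
        rw [h0 u h'] at hgu; linarith
      have h3 := hE u huE t ht (le_of_lt hu.2)
      rw [hgu] at h3
      have hKu : K * (t - u) ≤ K * (t - s) :=
        mul_le_mul_of_nonneg_left (by linarith [hu.1]) hK
      linarith
  · rw [h0 s hs, h0 t ht]; linarith

lemma SG_taylor {g g' : ℝ → ℝ} {K : ℝ} (hK : 0 ≤ K)
    (hd : ∀ t, HasDerivAt g (g' t) t) (hmono : Monotone g')
    (hlip : ∀ s t : ℝ, s ≤ t → g' t - g' s ≤ K * (t - s)) :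
    g 0 + g' 0 ≤ g 1 ∧ g 1 ≤ g 0 + g' 0 + K / 2 := by
  have hInt : IntervalIntegrable g' MeasureTheory.volume 0 1 := hmono.intervalIntegrable
  have hFTC : ∫ t in (0:ℝ)..1, g' t = g 1 - g 0 :=
    intervalIntegral.integral_eq_sub_of_hasDerivAt (fun t _ => hd t) hInt
  constructor
  · have h1 : ∫ _t in (0:ℝ)..1, g' 0 ≤ ∫ t in (0:ℝ)..1, g' t := by
      apply intervalIntegral.integral_mono_on zero_le_one intervalIntegrable_const hInt
      intro t htt
      exact hmono htt.1
    rw [hFTC] at h1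
    simp only [intervalIntegral.integral_const, smul_eq_mul] at h1
    linarith
  · have h2 : ∫ t in (0:ℝ)..1, g' t ≤ ∫ t in (0:ℝ)..1, (g' 0 + K * t) := by
      apply intervalIntegral.integral_mono_on zero_le_one hInt
        ((continuous_const.add (continuous_const.mul continuous_id')).intervalIntegrable 0 1)
      intro t htt
      have := hlip 0 t htt.1
      show g' t ≤ g' 0 + K * t
      linarith
    rw [hFTC] at h2
    have hval : ∫ t in (0:ℝ)..1, (g' 0 + K * t) = g' 0 + K / 2 := by
      rw [intervalIntegral.integral_add (f := fun _ => g' 0) (g := fun t => K * t) intervalIntegrable_const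
        ((continuous_const.mul continuous_id').intervalIntegrable 0 1)]
      simp only [intervalIntegral.integral_const, smul_eq_mul]
      rw [intervalIntegral.integral_const_mul, integral_id]
      ring
    rw [hval] at h2
    linarith
end deriv

/-- Lemma 1: the basic recursion satisfied by the iterates of
Algorithm 1 under Assumptions (A1)–(A4). -/
theorem stmt_2 {n : ℕ} (N : EuclideanSpace ℝ (Fin n) → ℝ) (hN : IsNorm N)
    -- the sample space `Ξ`, the distribution `𝒫`, and the random loss `F`
    (Ξ : Type) [MeasurableSpace Ξ] (ν : Measure Ξ) [IsProbabilityMeasure ν]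
    (F : EuclideanSpace ℝ (Fin n) → Ξ → ℝ)
    (gF : EuclideanSpace ℝ (Fin n) → Ξ → EuclideanSpace ℝ (Fin n))
    (hFconv : ∀ ξ, ConvexOn ℝ Set.univ fun x => F x ξ)
    (hFgrad : ∀ ξ x, HasGradientAt (fun y => F y ξ) (gF x ξ) x)
    -- the expectation function `f` and its gradient
    (f : EuclideanSpace ℝ (Fin n) → ℝ)
    (gf : EuclideanSpace ℝ (Fin n) → EuclideanSpace ℝ (Fin n))
    (hf : ∀ x, f x = ∫ ξ, F x ξ ∂ν)
    (hgf : ∀ x, HasGradientAt f (gf x) x)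
    (hgfE : ∀ x, gf x = ∫ ξ, gF x ξ ∂ν)
    -- (A2) Lipschitz continuity of the gradients, (A3) bounded gradient variance
    (L : ℝ) (hL : 0 ≤ L)
    (hA2 : ∀ ξ y z, dualNorm N (gF y ξ - gF z ξ) ≤ L * N (y - z))
    (σ : ℝ) (hσ : 0 ≤ σ)
    (hA3 : ∀ x, ∫ ξ, (dualNorm N (gF x ξ - gf x)) ^ 2 ∂ν ≤ σ ^ 2)
    -- (A4) the regularizer `Ψ`, convex (μΨ = 0) or `μΨ`-strongly convex,
    -- with closed effective domain `S`
    (S : Set (EuclideanSpace ℝ (Fin n))) (hSclosed : IsClosed S) (hSconv : Convex ℝ S)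
    (hSne : S.Nonempty)
    (Ψ : EuclideanSpace ℝ (Fin n) → ℝ) (μΨ : ℝ) (hμΨ : 0 ≤ μΨ)
    (hΨconv : ConvexOn ℝ S Ψ)
    (hΨstrong : ∀ x ∈ S, ∀ s : EuclideanSpace ℝ (Fin n),
      (∀ y ∈ S, Ψ x + ⟪s, y - x⟫ ≤ Ψ y) →
      ∀ y ∈ S, Ψ x + ⟪s, y - x⟫ + μΨ / 2 * (N (y - x)) ^ 2 ≤ Ψ y)
    -- the distance generating function `ω` with gradient `gw`, 1-strongly convex
    -- w.r.t. `N` on `S`, and the Bregman distance `D`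
    (w : EuclideanSpace ℝ (Fin n) → ℝ)
    (gw : EuclideanSpace ℝ (Fin n) → EuclideanSpace ℝ (Fin n))
    (hw : ∀ x ∈ S, HasGradientAt w (gw x) x) (hgwc : ContinuousOn gw S)
    (hwstrong : ∀ x ∈ S, ∀ y ∈ S, w x + ⟪gw x, y - x⟫ + 1 / 2 * (N (y - x)) ^ 2 ≤ w y)
    (D : EuclideanSpace ℝ (Fin n) → EuclideanSpace ℝ (Fin n) → ℝ)
    (hD : ∀ x y, D x y = w y - w x - ⟪gw x, y - x⟫)
    -- the composite objective `φ = f + Ψ` and (A1) an optimizer `x*`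
    (φ : EuclideanSpace ℝ (Fin n) → ℝ) (hφ : ∀ x, φ x = f x + Ψ x)
    (xstar : EuclideanSpace ℝ (Fin n)) (hxstar : xstar ∈ S)
    (hopt : ∀ z ∈ S, φ xstar ≤ φ z)
    (φstar : ℝ) (hφstar : φstar = φ xstar)
    -- Algorithm 1: delays, batch size, samples, step-sizes, iterates
    (τmax : ℕ) (d : ℕ → ℕ) (hd : ∀ k, d k ≤ k ∧ k - d k ≤ τmax)
    (b : ℕ) (hb : 0 < b)
    (ξ : ℕ → Fin b → Ξ)
    (γ : ℕ → ℝ) (hγ : ∀ k, 0 < γ k)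
    (x : ℤ → EuclideanSpace ℝ (Fin n))
    (hxneg : ∀ k : ℤ, k ≤ 0 → x k = x 0)
    (hxS : ∀ k : ℤ, x k ∈ S)
    (gave : ℕ → EuclideanSpace ℝ (Fin n))
    (hgave : ∀ k : ℕ, gave k = (b : ℝ)⁻¹ • ∑ i, gF (x (d k)) (ξ k i))
    (hrec : ∀ k : ℕ, ∀ z ∈ S,
      ⟪gave k, x ((k : ℤ) + 1)⟫ + Ψ (x ((k : ℤ) + 1)) + 1 / γ k * D (x (k : ℤ)) (x ((k : ℤ) + 1))
        ≤ ⟪gave k, z⟫ + Ψ z + 1 / γ k * D (x (k : ℤ)) z)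
    -- the gradient errors `e(d(k)) = ∇f(x(d(k))) - g_ave(d(k))`
    (e : ℕ → EuclideanSpace ℝ (Fin n)) (he : ∀ k : ℕ, e k = gf (x (d k)) - gave k)
    -- a strictly positive sequence `η`
    (η : ℕ → ℝ) (hη : ∀ k, 0 < η k) :
    ∀ k : ℕ,
      φ (x ((k : ℤ) + 1)) - φstar + 1 / γ k * D (x ((k : ℤ) + 1)) xstar
        ≤ 1 / (2 * η k) * (dualNorm N (e k)) ^ 2
          + ⟪e k, x (k : ℤ) - xstar⟫ + 1 / γ k * D (x (k : ℤ)) xstar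
          + L * ((τmax : ℝ) + 1) / 2 * ∑ j ∈ Finset.range (τmax + 1),
              (N (x ((k : ℤ) - j) - x ((k : ℤ) - j + 1))) ^ 2
          - 1 / 2 * (1 / γ k - η k) * (N (x ((k : ℤ) + 1) - x (k : ℤ))) ^ 2
          - μΨ / 2 * (N (x ((k : ℤ) + 1) - xstar)) ^ 2 := by
  intro k
  have hγk := hγ k
  have hηk := hη k
  set u : EuclideanSpace ℝ (Fin n) := x ((k : ℤ) + 1) with hu_def
  set xk : EuclideanSpace ℝ (Fin n) := x (k : ℤ) with hxk_def
  set xd : EuclideanSpace ℝ (Fin n) := x ((d k : ℤ)) with hxd_def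
  -- Step A : convexity and smoothness of `f`
  have key_f : ∀ a v : EuclideanSpace ℝ (Fin n),
      f a + ⟪gf a, v⟫ ≤ f (a + v) ∧ f (a + v) ≤ f a + ⟪gf a, v⟫ + L * N v ^ 2 / 2 := by
    intro a v
    set G : ℝ → ℝ := fun t => f (a + t • v) with hG
    set G' : ℝ → ℝ := fun t => ⟪gf (a + t • v), v⟫ with hG'
    have hdG : ∀ t, HasDerivAt G (G' t) t := fun t => SG_line_deriv (hgf (a + t • v))
    set Eset : Set ℝ := {t : ℝ | Integrable (fun ζ => gF (a + t • v) ζ) ν} with hEset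
    have hjunk : ∀ t, t ∉ Eset → G' t = 0 := by
      intro t ht
      have h0 : gf (a + t • v) = 0 := by
        rw [hgfE]
        exact integral_undef ht
      simp [hG', h0]
    have hpairmono : ∀ s ∈ Eset, ∀ t ∈ Eset, s ≤ t → G' s ≤ G' t := by
      intro s hs t ht hst
      have hsI : Integrable (fun ζ => gF (a + s • v) ζ) ν := hs
      have htI : Integrable (fun ζ => gF (a + t • v) ζ) ν := ht
      have hint : Integrable (fun ζ => gF (a + t • v) ζ - gF (a + s • v) ζ) ν := htI.sub hsI
      have hdiffe : gf (a + t • v) - gf (a + s • v)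
          = ∫ ζ, (gF (a + t • v) ζ - gF (a + s • v) ζ) ∂ν := by
        rw [hgfE, hgfE, ← integral_sub htI hsI]
      have hqp : (a + t • v) - (a + s • v) = (t - s) • v := by module
      have hm1 : 0 ≤ ⟪gf (a + t • v) - gf (a + s • v), (a + t • v) - (a + s • v)⟫ := by
        rw [hdiffe, real_inner_comm, ← integral_inner hint]
        apply integral_nonneg
        intro ζ
        have h10 := SG_monoGrad (hFconv ζ) (fun p => hFgrad ζ p) (a + s • v) (a + t • v)
        show (0:ℝ) ≤ ⟪(a + t • v) - (a + s • v), gF (a + t • v) ζ - gF (a + s • v) ζ⟫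
        rw [real_inner_comm]
        exact h10
      rw [hqp, real_inner_smul_right] at hm1
      have hGdiff : G' t - G' s = ⟪gf (a + t • v) - gf (a + s • v), v⟫ := by
        simp [hG', inner_sub_left]
      rcases eq_or_lt_of_le hst with rfl | hlt
      · exact le_refl _
      · nlinarith [hm1, hGdiff]
    have hpairlip : ∀ s ∈ Eset, ∀ t ∈ Eset, s ≤ t → G' t - G' s ≤ (L * N v ^ 2) * (t - s) := by
      intro s hs t ht hst
      have hsI : Integrable (fun ζ => gF (a + s • v) ζ) ν := hs
      have htI : Integrable (fun ζ => gF (a + t • v) ζ) ν := ht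
      have hint : Integrable (fun ζ => gF (a + t • v) ζ - gF (a + s • v) ζ) ν := htI.sub hsI
      have hdiffe : gf (a + t • v) - gf (a + s • v)
          = ∫ ζ, (gF (a + t • v) ζ - gF (a + s • v) ζ) ∂ν := by
        rw [hgfE, hgfE, ← integral_sub htI hsI]
      have hqp : (a + t • v) - (a + s • v) = (t - s) • v := by module
      have hNqp : N ((a + t • v) - (a + s • v)) = (t - s) * N v := by
        rw [hqp, hN.2.2.1, abs_of_nonneg (by linarith : (0:ℝ) ≤ t - s)]
      have hdual : dualNorm N (gf (a + t • v) - gf (a + s • v)) ≤ L * ((t - s) * N v) := by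
        rw [hdiffe]
        apply SG_dual_integral_le hN hint
        intro ζ
        have h2 := hA2 ζ (a + t • v) (a + s • v)
        rwa [hNqp] at h2
      have hGdiff : G' t - G' s = ⟪gf (a + t • v) - gf (a + s • v), v⟫ := by
        simp [hG', inner_sub_left]
      rw [hGdiff]
      calc ⟪gf (a + t • v) - gf (a + s • v), v⟫
          = ⟪v, gf (a + t • v) - gf (a + s • v)⟫ := real_inner_comm _ _
        _ ≤ N v * dualNorm N (gf (a + t • v) - gf (a + s • v)) := SG_inner_le_dual hN _ _
        _ ≤ N v * (L * ((t - s) * N v)) := mul_le_mul_of_nonneg_left hdual (hN.1 v)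
        _ = (L * N v ^ 2) * (t - s) := by ring
    have hK : (0:ℝ) ≤ L * N v ^ 2 := mul_nonneg hL (sq_nonneg _)
    have hmono : Monotone G' := SG_darboux_mono hdG Eset hpairmono hjunk
    have hlip : ∀ s t : ℝ, s ≤ t → G' t - G' s ≤ (L * N v ^ 2) * (t - s) :=
      SG_darboux_lip hK hdG Eset hpairlip hjunk
    obtain ⟨hlo, hhi⟩ := SG_taylor hK hdG hmono hlip
    have e0 : G 0 = f a := by simp [hG]
    have e1 : G 1 = f (a + v) := by simp [hG]
    have e2 : G' 0 = ⟪gf a, v⟫ := by simp [hG']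
    rw [e0, e1, e2] at hlo hhi
    exact ⟨hlo, by linarith⟩
  have hconvf : f xd + ⟪gf xd, xstar - xd⟫ ≤ f xstar := by
    have h1 := (key_f xd (xstar - xd)).1
    rwa [show xd + (xstar - xd) = xstar by abel] at h1
  have hdesc : f u ≤ f xd + ⟪gf xd, u - xd⟫ + L * N (u - xd) ^ 2 / 2 := by
    have h1 := (key_f xd (u - xd)).2
    rwa [show xd + (u - xd) = u by abel] at h1
  -- Step B : the prox-step subgradient inequality
  have huS : u ∈ S := hxS _
  have hxkS : xk ∈ S := hxS _
  have hsubgrad : ∀ y ∈ S,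
      Ψ u + ⟪-(gave k) - (γ k)⁻¹ • (gw u - gw xk), y - u⟫ ≤ Ψ y := by
    intro y hy
    have hkey : 0 ≤ ⟪gave k, y - u⟫ + (Ψ y - Ψ u) - (γ k)⁻¹ * ⟪gw xk, y - u⟫
        + (γ k)⁻¹ * ⟪gw u, y - u⟫ := by
      have h0 : u + (0:ℝ) • (y - u) = u := by simp
      have hgd : HasGradientAt w (gw u) (u + (0:ℝ) • (y - u)) := by
        rw [h0]; exact hw u huS
      have hψ : HasDerivAt (fun t : ℝ => w (u + t • (y - u))) ⟪gw u, y - u⟫ 0 :=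
        SG_line_deriv hgd
      have hslope : Filter.Tendsto (slope (fun t : ℝ => w (u + t • (y - u))) 0)
          (nhdsWithin 0 (Set.Ioi 0)) (nhds ⟪gw u, y - u⟫) :=
        (hasDerivAt_iff_tendsto_slope.1 hψ).mono_left
          (nhdsWithin_mono 0 (fun a ha => ne_of_gt ha))
      have htend : Filter.Tendsto
          (fun t : ℝ => ⟪gave k, y - u⟫ + (Ψ y - Ψ u) - (γ k)⁻¹ * ⟪gw xk, y - u⟫
            + (γ k)⁻¹ * slope (fun t : ℝ => w (u + t • (y - u))) 0 t)
          (nhdsWithin 0 (Set.Ioi 0))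
          (nhds (⟪gave k, y - u⟫ + (Ψ y - Ψ u) - (γ k)⁻¹ * ⟪gw xk, y - u⟫
            + (γ k)⁻¹ * ⟪gw u, y - u⟫)) :=
        Filter.Tendsto.add tendsto_const_nhds (hslope.const_mul _)
      apply ge_of_tendsto htend
      filter_upwards [Ioc_mem_nhdsGT zero_lt_one]
      intro t ht
      have htpos : (0:ℝ) < t := ht.1
      set z : EuclideanSpace ℝ (Fin n) := u + t • (y - u) with hz
      have hzcomb : z = (1 - t) • u + t • y := by rw [hz]; module
      have hzS : z ∈ S := by
        rw [hzcomb]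
        exact hSconv huS hy (by linarith [ht.2]) (le_of_lt htpos) (by ring)
      have hrec' := hrec k z hzS
      rw [hD xk u, hD xk z] at hrec'
      have hΨz : Ψ z ≤ (1 - t) * Ψ u + t * Ψ y := by
        rw [hzcomb]
        exact hΨconv.2 huS hy (by linarith [ht.2]) (le_of_lt htpos) (by ring)
      have hinn1 : ⟪gave k, z⟫ - ⟪gave k, u⟫ = t * ⟪gave k, y - u⟫ := by
        rw [← inner_sub_right, show z - u = t • (y - u) by rw [hz]; abel,
          real_inner_smul_right]
      have hinn2 : ⟪gw xk, z - xk⟫ - ⟪gw xk, u - xk⟫ = t * ⟪gw xk, y - u⟫ := by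
        rw [← inner_sub_right, show z - xk - (u - xk) = t • (y - u) by rw [hz]; abel,
          real_inner_smul_right]
      have hslope_eq : slope (fun t : ℝ => w (u + t • (y - u))) 0 t = (w z - w u) / t := by
        rw [slope_def_field]
        simp [hz]
      have hws : t * slope (fun t : ℝ => w (u + t • (y - u))) 0 t = w z - w u := by
        rw [hslope_eq]
        field_simp
      have hγinv : 1 / γ k = (γ k)⁻¹ := one_div _
      rw [hγinv] at hrec'
      have hstep : 0 ≤ t * (⟪gave k, y - u⟫ + (Ψ y - Ψ u) - (γ k)⁻¹ * ⟪gw xk, y - u⟫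
          + (γ k)⁻¹ * slope (fun t : ℝ => w (u + t • (y - u))) 0 t) := by
        have hexp : t * (⟪gave k, y - u⟫ + (Ψ y - Ψ u) - (γ k)⁻¹ * ⟪gw xk, y - u⟫
            + (γ k)⁻¹ * slope (fun t : ℝ => w (u + t • (y - u))) 0 t)
            = (⟪gave k, z⟫ - ⟪gave k, u⟫) + t * (Ψ y - Ψ u)
              + (γ k)⁻¹ * ((w z - w u) - (⟪gw xk, z - xk⟫ - ⟪gw xk, u - xk⟫)) := by
          linear_combination (γ k)⁻¹ * hws - hinn1 + (γ k)⁻¹ * hinn2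
        rw [hexp]
        linarith [hrec', hΨz]
      have h9 : t * 0 ≤ t * (⟪gave k, y - u⟫ + (Ψ y - Ψ u) - (γ k)⁻¹ * ⟪gw xk, y - u⟫
          + (γ k)⁻¹ * slope (fun t : ℝ => w (u + t • (y - u))) 0 t) := by
        rw [mul_zero]; exact hstep
      exact le_of_mul_le_mul_left h9 htpos
    have hs0 : ⟪-(gave k) - (γ k)⁻¹ • (gw u - gw xk), y - u⟫
        = -⟪gave k, y - u⟫ - (γ k)⁻¹ * (⟪gw u, y - u⟫ - ⟪gw xk, y - u⟫) := by
      rw [inner_sub_left, inner_neg_left, real_inner_smul_left, inner_sub_left]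
    rw [hs0]
    linarith [hkey]
  -- Step C : assembly
  have hstrong := hΨstrong u huS _ hsubgrad xstar hxstar
  have hs0' : ⟪-(gave k) - (γ k)⁻¹ • (gw u - gw xk), xstar - u⟫
      = -⟪gave k, xstar - u⟫ - (γ k)⁻¹ * ⟪gw u - gw xk, xstar - u⟫ := by
    rw [inner_sub_left, inner_neg_left, real_inner_smul_left]
  have h3pt : ⟪gw u - gw xk, xstar - u⟫ = D xk xstar - D u xstar - D xk u := by
    rw [hD, hD, hD]
    simp only [inner_sub_left, inner_sub_right]
    ring
  have hgavec : ⟪gave k, xstar - u⟫ = -⟪gave k, u - xstar⟫ := by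
    rw [show xstar - u = -(u - xstar) by abel, inner_neg_right]
  have hflip2 : N (xstar - u) = N (u - xstar) := SG_sub_comm hN _ _
  rw [hs0', h3pt, hgavec, hflip2] at hstrong
  have hγinv' : (γ k)⁻¹ = 1 / γ k := (one_div _).symm
  rw [hγinv'] at hstrong
  have hiden : ⟪gf xd, u - xd⟫ - ⟪gf xd, xstar - xd⟫ = ⟪gf xd, u - xstar⟫ := by
    rw [← inner_sub_right]
    congr 1
    abel
  have hge : gf xd = e k + gave k := by rw [he k]; abel
  have hsplit : ⟪gf xd, u - xstar⟫
      = ⟪gave k, u - xstar⟫ + ⟪e k, u - xk⟫ + ⟪e k, xk - xstar⟫ := by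
    rw [hge, inner_add_left, show u - xstar = (u - xk) + (xk - xstar) by abel,
      inner_add_right]
    ring
  have hDlow : 1 / γ k * (1/2 * N (u - xk) ^ 2) ≤ 1 / γ k * D xk u := by
    apply mul_le_mul_of_nonneg_left _ (by positivity)
    have h6 := hwstrong xk hxkS u huS
    rw [hD]
    linarith
  have hfen : ⟪e k, u - xk⟫
      ≤ 1 / (2 * η k) * (dualNorm N (e k)) ^ 2 + η k / 2 * (N (u - xk)) ^ 2 := by
    have h1 : ⟪e k, u - xk⟫ ≤ N (u - xk) * dualNorm N (e k) := by
      rw [real_inner_comm]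
      exact SG_inner_le_dual hN _ _
    have hid2 : 1 / (2 * η k) * (dualNorm N (e k)) ^ 2 + η k / 2 * (N (u - xk)) ^ 2
        - N (u - xk) * dualNorm N (e k)
        = 1 / (2 * η k) * (dualNorm N (e k) - η k * N (u - xk)) ^ 2 := by
      field_simp
      ring
    have hpos2 : 0 ≤ 1 / (2 * η k) * (dualNorm N (e k) - η k * N (u - xk)) ^ 2 := by positivity
    linarith [h1, hid2, hpos2]
  -- delay / telescoping bound
  have htel : ∀ m : ℕ,
      ∑ j ∈ Finset.range (m + 1), (x ((k:ℤ) - j + 1) - x ((k:ℤ) - j))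
        = x ((k:ℤ) + 1) - x ((k:ℤ) - m) := by
    intro m
    induction m with
    | zero => simp
    | succ m ih =>
        rw [Finset.sum_range_succ, ih]
        have h7 : (k:ℤ) - ((m:ℤ) + 1) + 1 = (k:ℤ) - m := by ring
        push_cast
        rw [h7]
        abel
  have hsumB : N (u - xd) ^ 2
      ≤ ((τmax:ℝ) + 1) * ∑ j ∈ Finset.range (τmax + 1),
          (N (x ((k:ℤ) - j) - x ((k:ℤ) - j + 1))) ^ 2 := by
    set m := k - d k with hm
    have hdk1 : ((d k : ℤ)) = (k:ℤ) - (m:ℤ) := by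
      have h8 := (hd k).1
      omega
    have h1 : u - xd = ∑ j ∈ Finset.range (m + 1), (x ((k:ℤ) - j + 1) - x ((k:ℤ) - j)) := by
      rw [htel m, hu_def, hxd_def, hdk1]
    have h2 : N (u - xd) ≤ ∑ j ∈ Finset.range (m + 1), N (x ((k:ℤ) - j + 1) - x ((k:ℤ) - j)) := by
      rw [h1]
      exact SG_sum_le hN (m + 1) _
    have h3 : (∑ j ∈ Finset.range (m + 1), N (x ((k:ℤ) - j + 1) - x ((k:ℤ) - j))) ^ 2
        ≤ ((m:ℝ) + 1) * ∑ j ∈ Finset.range (m + 1),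
            (N (x ((k:ℤ) - j + 1) - x ((k:ℤ) - j))) ^ 2 := by
      have h9 := sq_sum_le_card_mul_sum_sq (s := Finset.range (m + 1))
        (f := fun j => N (x ((k:ℤ) - j + 1) - x ((k:ℤ) - j)))
      rw [Finset.card_range] at h9
      push_cast at h9
      convert h9 using 2
    have h4 : ∑ j ∈ Finset.range (m + 1), (N (x ((k:ℤ) - j + 1) - x ((k:ℤ) - j))) ^ 2
        ≤ ∑ j ∈ Finset.range (τmax + 1), (N (x ((k:ℤ) - j) - x ((k:ℤ) - j + 1))) ^ 2 := by
      have hmτ : m + 1 ≤ τmax + 1 := by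
        have h8 := (hd k).2
        omega
      calc ∑ j ∈ Finset.range (m + 1), (N (x ((k:ℤ) - j + 1) - x ((k:ℤ) - j))) ^ 2
          = ∑ j ∈ Finset.range (m + 1), (N (x ((k:ℤ) - j) - x ((k:ℤ) - j + 1))) ^ 2 :=
            Finset.sum_congr rfl (fun j _ => by rw [SG_sub_comm hN])
        _ ≤ ∑ j ∈ Finset.range (τmax + 1), (N (x ((k:ℤ) - j) - x ((k:ℤ) - j + 1))) ^ 2 :=
            Finset.sum_le_sum_of_subset_of_nonneg (Finset.range_subset_range.2 hmτ)
              (fun j _ _ => sq_nonneg _)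
    have hsq : N (u - xd) ^ 2
        ≤ (∑ j ∈ Finset.range (m + 1), N (x ((k:ℤ) - j + 1) - x ((k:ℤ) - j))) ^ 2 :=
      pow_le_pow_left₀ (hN.1 _) h2 2
    have hm5 : ((m:ℝ) + 1) ≤ ((τmax:ℝ) + 1) := by
      have h8 : m ≤ τmax := (hd k).2
      have h8' : (m:ℝ) ≤ (τmax:ℝ) := by exact_mod_cast h8
      linarith
    have hsn : 0 ≤ ∑ j ∈ Finset.range (m + 1), (N (x ((k:ℤ) - j + 1) - x ((k:ℤ) - j))) ^ 2 :=
      Finset.sum_nonneg fun j _ => sq_nonneg _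
    have hsτ : 0 ≤ ∑ j ∈ Finset.range (τmax + 1), (N (x ((k:ℤ) - j) - x ((k:ℤ) - j + 1))) ^ 2 :=
      le_trans hsn h4
    have hmp : (0:ℝ) ≤ (m:ℝ) + 1 := by positivity
    nlinarith [hsq, h3, h4, hm5, hsn, hsτ, hmp]
  have hLsum : L * N (u - xd) ^ 2 / 2
      ≤ L * ((τmax:ℝ) + 1) / 2 * ∑ j ∈ Finset.range (τmax + 1),
          (N (x ((k:ℤ) - j) - x ((k:ℤ) - j + 1))) ^ 2 := by
    have h9 := mul_le_mul_of_nonneg_left hsumB (by positivity : (0:ℝ) ≤ L / 2)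
    nlinarith [h9]
  rw [hφstar, hφ u, hφ xstar]
  have hbridge : 1 / 2 * (1 / γ k - η k) * (N (u - xk)) ^ 2
      = 1 / γ k * (1/2 * N (u - xk) ^ 2) - η k / 2 * (N (u - xk)) ^ 2 := by ring
  linarith [hdesc, hconvf, hstrong, hfen, hDlow, hLsum, hiden, hsplit, hbridge]
end

section
/- Let {x(k)}_{k ∈ ℤ} be a sequence in a normed space with x(k) = x(0) for all k ≤ 0, let L > 0, μ > 0, Q > 0 be reals, τ ≥ 0 an integer, T ∈ ℕ, and define γ(k)⁻¹ = 2L(τ+1)² + (μ/(3Q))(k + τ + 1) for k ∈ ℕ₀. Then (L(τ+1)/2) Σ_{k=0}^{T−1} Σ_{j=0}^{τ} (1/γ(k)) ‖x(k−j) − x(k−j+1)‖² ≤ (1/4) Σ_{k=0}^{T−1} (1/γ(k)²) ‖x(k) − x(k+1)‖². -/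
lemma gauss_sum_real (n : ℕ) : ∑ j ∈ Finset.range (n + 1), (j : ℝ) = (n : ℝ) * ((n : ℝ) + 1) / 2 := by
  induction n with
  | zero => simp
  | succ n ih => rw [Finset.sum_range_succ, ih]; push_cast; ring

/-- With step-sizes `γ(k)⁻¹ = 2L(τ+1)² + (μ/(3Q))(k+τ+1)` and a sequence
`x : ℤ → E` with `x k = x 0` for `k ≤ 0`,
`(L(τ+1)/2) ∑_{k=0}^{T-1} ∑_{j=0}^{τ} (1/γ(k)) ‖x(k-j) - x(k-j+1)‖²
  ≤ (1/4) ∑_{k=0}^{T-1} (1/γ(k)²) ‖x(k) - x(k+1)‖²`. -/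
theorem stmt_14 {E : Type*} [NormedAddCommGroup E] (x : ℤ → E)
    (hx : ∀ k : ℤ, k ≤ 0 → x k = x 0)
    (L μ Q : ℝ) (hL : 0 < L) (hμ : 0 < μ) (hQ : 0 < Q) (τ : ℕ) (T : ℕ) (hT : 0 < T)
    (γ : ℕ → ℝ)
    (hγ : ∀ k : ℕ, 1 / γ k = 2 * L * ((τ : ℝ) + 1) ^ 2 + μ / (3 * Q) * ((k : ℝ) + τ + 1)) :
    L * ((τ : ℝ) + 1) / 2 *
        ∑ k ∈ Finset.range T, ∑ j ∈ Finset.range (τ + 1),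
          (1 / γ k) * ‖x ((k : ℤ) - j) - x ((k : ℤ) - j + 1)‖ ^ 2
      ≤ (1 / 4) * ∑ k ∈ Finset.range T, (1 / γ k) ^ 2 * ‖x (k : ℤ) - x ((k : ℤ) + 1)‖ ^ 2 := by
  have hc0 : 0 < μ / (3 * Q) := by positivity
  have hγpos : ∀ k : ℕ, 0 < 1 / γ k := by
    intro k; rw [hγ k]; positivity
  set b : ℤ → ℝ := fun m => ‖x m - x (m + 1)‖ ^ 2 with hb
  have hbnn : ∀ m : ℤ, 0 ≤ b m := fun m => by positivity
  have hb0 : ∀ m : ℤ, m < 0 → b m = 0 := by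
    intro m hm
    simp only [hb]
    rw [hx m (by omega), hx (m + 1) (by omega), sub_self, norm_zero]
    norm_num
  have key : ∀ m : ℕ, (L * ((τ : ℝ) + 1) / 2) * ∑ j ∈ Finset.range (τ + 1), (1 / γ (m + j))
      ≤ (1 / 4) * (1 / γ m) ^ 2 := by
    intro m
    have hsum : ∑ j ∈ Finset.range (τ + 1), (1 / γ (m + j))
        = ((τ : ℝ) + 1) * (2 * L * ((τ : ℝ) + 1) ^ 2 + μ / (3 * Q) * ((m : ℝ) + τ + 1))
          + μ / (3 * Q) * ((τ : ℝ) * ((τ : ℝ) + 1) / 2) := by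
      have h1 : ∀ j ∈ Finset.range (τ + 1), 1 / γ (m + j)
          = (2 * L * ((τ : ℝ) + 1) ^ 2 + μ / (3 * Q) * ((m : ℝ) + τ + 1)) + μ / (3 * Q) * (j : ℝ) := by
        intro j _; rw [hγ (m + j)]; push_cast; ring
      rw [Finset.sum_congr rfl h1, Finset.sum_add_distrib, Finset.sum_const, ← Finset.mul_sum]
      rw [gauss_sum_real τ, Finset.card_range]; push_cast; ring
    rw [hsum, hγ m]
    have hm : (0 : ℝ) ≤ (m : ℝ) := Nat.cast_nonneg m
    have hτ : (0 : ℝ) ≤ (τ : ℝ) := Nat.cast_nonneg τ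
    nlinarith [mul_pos (mul_pos hL hc0) (by positivity : (0:ℝ) < ((τ:ℝ)+1)^2),
      mul_nonneg (mul_nonneg (mul_nonneg hL.le hc0.le) hm) (by positivity : (0:ℝ) ≤ ((τ:ℝ)+1)^2),
      sq_nonneg (μ / (3 * Q) * ((m : ℝ) + τ + 1))]
  have swap :
      ∑ k ∈ Finset.range T, ∑ j ∈ Finset.range (τ + 1), (1 / γ k) * b ((k : ℤ) - j)
      ≤ ∑ m ∈ Finset.range T, ∑ j ∈ Finset.range (τ + 1), (1 / γ (m + j)) * b (m : ℤ) := by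
    rw [← Finset.sum_product', ← Finset.sum_product']
    calc ∑ p ∈ Finset.range T ×ˢ Finset.range (τ + 1), (1 / γ p.1) * b ((p.1 : ℤ) - p.2)
        = ∑ p ∈ (Finset.range T ×ˢ Finset.range (τ + 1)).filter (fun p => p.2 ≤ p.1),
            (1 / γ p.1) * b ((p.1 : ℤ) - p.2) := by
          refine (Finset.sum_filter_of_ne ?_).symm
          intro p _ hne
          by_contra h
          push_neg at h
          apply hne
          rw [hb0 _ (by exact_mod_cast (by omega : ((p.1 : ℤ) - p.2) < 0)), mul_zero]
      _ = ∑ q ∈ (Finset.range T ×ˢ Finset.range (τ + 1)).filter (fun q => q.1 + q.2 < T),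
            (1 / γ (q.1 + q.2)) * b (q.1 : ℤ) := by
          refine Finset.sum_nbij' (fun p => (p.1 - p.2, p.2)) (fun q => (q.1 + q.2, q.2))
            ?_ ?_ ?_ ?_ ?_
          · intro p hp
            simp only [Finset.mem_filter, Finset.mem_product, Finset.mem_range] at hp ⊢
            omega
          · intro q hq
            simp only [Finset.mem_filter, Finset.mem_product, Finset.mem_range] at hq ⊢
            omega
          · rintro ⟨a, c⟩ hp
            simp only [Finset.mem_filter, Finset.mem_product, Finset.mem_range] at hp
            simp only [Prod.mk.injEq]
            exact ⟨by omega, trivial⟩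
          · rintro ⟨a, c⟩ hq
            simp only [Finset.mem_filter, Finset.mem_product, Finset.mem_range] at hq
            simp only [Prod.mk.injEq]
            exact ⟨by omega, trivial⟩
          · intro p hp
            simp only [Finset.mem_filter, Finset.mem_product, Finset.mem_range] at hp
            have h1 : p.1 - p.2 + p.2 = p.1 := by omega
            have h2 : ((p.1 - p.2 : ℕ) : ℤ) = (p.1 : ℤ) - p.2 := by omega
            rw [h1, h2]
      _ ≤ ∑ q ∈ Finset.range T ×ˢ Finset.range (τ + 1), (1 / γ (q.1 + q.2)) * b (q.1 : ℤ) := by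
          refine Finset.sum_le_sum_of_subset_of_nonneg (Finset.filter_subset _ _) ?_
          intro q _ _
          exact mul_nonneg (hγpos _).le (hbnn _)
  have hC : (0 : ℝ) ≤ L * ((τ : ℝ) + 1) / 2 := by positivity
  calc L * ((τ : ℝ) + 1) / 2 *
        ∑ k ∈ Finset.range T, ∑ j ∈ Finset.range (τ + 1), (1 / γ k) * b ((k : ℤ) - j)
      ≤ L * ((τ : ℝ) + 1) / 2 *
        ∑ m ∈ Finset.range T, ∑ j ∈ Finset.range (τ + 1), (1 / γ (m + j)) * b (m : ℤ) :=
        mul_le_mul_of_nonneg_left swap hC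
    _ = ∑ m ∈ Finset.range T,
          ((L * ((τ : ℝ) + 1) / 2) * ∑ j ∈ Finset.range (τ + 1), (1 / γ (m + j))) * b (m : ℤ) := by
        rw [Finset.mul_sum]
        refine Finset.sum_congr rfl fun m _ => ?_
        rw [← Finset.sum_mul, mul_assoc]
    _ ≤ ∑ m ∈ Finset.range T, ((1 / 4) * (1 / γ m) ^ 2) * b (m : ℤ) := by
        refine Finset.sum_le_sum fun m _ => ?_
        exact mul_le_mul_of_nonneg_right (key m) (hbnn _)
    _ = (1 / 4) * ∑ k ∈ Finset.range T, (1 / γ k) ^ 2 * b (k : ℤ) := by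
        rw [Finset.mul_sum]; refine Finset.sum_congr rfl fun m _ => ?_; ring
end
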